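/- Let A = ⊕_{i=0}^{d} A_i be a commutative graded ℝ-algebra with an ℝ-linear functional ∫ : A_d → ℝ, let c ∈ A₁ with ∫(c^d) > 0, and define for z ∈ ℂ the element φ(z) := exp(-2πi·z·c) ∈ A ⊗_ℝ ℂ and Q(α,β) := (2πi)^d ∫((-1)^{deg} α · β) on matching degrees as above. Then for all z with Im(z) > 0, i^d · Q(φ(z), φ(z̄)) = (2π)^{2d} (2 Im z)^d ∫(c^d)/d! > 0, where φ(z̄) is the complex conjugate of φ(z) with respect to the real structure A ⊆ A ⊗ ℂ. -/
import Mathlib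


/-- Hodge–Riemann positivity for the (d,0)-component of the tropical
period.  In the (complexified) tropical cohomology ring, with `c` the radiance
obstruction in degree 1, real positive top integral `∫(c^d) = intc > 0`,
`φ(z) = exp(-2πi z c)` the finite exponential sum, and `Q` the bilinear extension of
`(α, β) ↦ (2πi)^d (-1)^{deg α} ∫(α·β)`, one has for `Im z > 0`:
`i^d · Q(φ(z), φ(z̄)) = (2π)^{2d} (2 Im z)^d ∫(c^d) / d! > 0`. -/
theorem trop_positivity {R : Type*} [CommRing R] [Algebra ℂ R]
    (𝒜 : ℕ → Submodule ℂ R) [GradedAlgebra 𝒜] (d : ℕ)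
    (c : R) (hc : c ∈ 𝒜 1) (hcd : c ^ d ∈ 𝒜 d)
    (I : 𝒜 d →ₗ[ℂ] ℂ) (intc : ℝ) (hpos : 0 < intc)
    (hI : I ⟨c ^ d, hcd⟩ = (intc : ℂ))
    (φ : ℂ → R)
    (hφ : ∀ z : ℂ, φ z = ∑ k ∈ Finset.range (d + 1),
        ((-(2 * Real.pi * Complex.I) * z) ^ k / (k.factorial : ℂ)) • c ^ k)
    (Q : R → R → ℂ)
    (hQ : ∀ α β, Q α β = (2 * Real.pi * Complex.I) ^ d *
        ∑ i ∈ Finset.range (d + 1), (-1 : ℂ) ^ i *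
          I (DirectSum.decompose 𝒜
              (GradedAlgebra.proj 𝒜 i α * GradedAlgebra.proj 𝒜 (d - i) β) d))
    (z : ℂ) (hz : 0 < z.im) :
    Complex.I ^ d * Q (φ z) (φ (starRingEnd ℂ z)) =
        (((2 * Real.pi) ^ (2 * d) * (2 * z.im) ^ d * intc / d.factorial : ℝ) : ℂ) ∧
      0 < (2 * Real.pi) ^ (2 * d) * (2 * z.im) ^ d * intc / d.factorial := by
  have hpi := Real.pi_pos
  have hfacd : (0 : ℝ) < (d.factorial : ℝ) := by exact_mod_cast d.factorial_pos
  refine ⟨?_, by positivity⟩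
  have hck : ∀ k : ℕ, c ^ k ∈ 𝒜 k := fun k => by
    simpa using SetLike.pow_mem_graded k hc
  -- projections of φ
  have hproj : ∀ (u : ℂ) (i : ℕ), i ≤ d →
      GradedAlgebra.proj 𝒜 i (φ u)
        = ((-(2 * Real.pi * Complex.I) * u) ^ i / (i.factorial : ℂ)) • c ^ i := by
    intro u i hi
    rw [hφ, map_sum, Finset.sum_eq_single i]
    · rw [map_smul, GradedAlgebra.proj_apply,
        DirectSum.decompose_of_mem_same 𝒜 (hck i)]
    · intro k _ hne
      rw [map_smul, GradedAlgebra.proj_apply,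
        DirectSum.decompose_of_mem_ne 𝒜 (hck k) hne, smul_zero]
    · intro h
      exact absurd (Finset.mem_range.mpr (Nat.lt_succ_of_le hi)) h
  -- each summand of Q
  have hterm : ∀ i ∈ Finset.range (d + 1),
      (-1 : ℂ) ^ i * I (DirectSum.decompose 𝒜
          (GradedAlgebra.proj 𝒜 i (φ z)
            * GradedAlgebra.proj 𝒜 (d - i) (φ (starRingEnd ℂ z))) d)
        = ((2 * Real.pi * Complex.I * z) ^ i / (i.factorial : ℂ)
            * ((-(2 * Real.pi * Complex.I) * (starRingEnd ℂ z)) ^ (d - i)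
                / ((d - i).factorial : ℂ))) * (intc : ℂ) := by
    intro i hi
    have hi' : i ≤ d := Nat.lt_succ_iff.mp (Finset.mem_range.mp hi)
    have key : ∀ a b : ℂ,
        I (DirectSum.decompose 𝒜 ((a • c ^ i) * (b • c ^ (d - i))) d)
          = a * b * (intc : ℂ) := by
      intro a b
      rw [smul_mul_smul_comm, ← pow_add, Nat.add_sub_cancel' hi']
      have hdec : (DirectSum.decompose 𝒜 ((a * b) • c ^ d) d)
          = (a * b) • (⟨c ^ d, hcd⟩ : 𝒜 d) := by
        apply Subtype.ext
        rw [DirectSum.decompose_of_mem_same 𝒜 (Submodule.smul_mem _ _ hcd)]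
        rfl
      rw [hdec, map_smul, hI, smul_eq_mul]
    rw [hproj z i hi', hproj _ _ (Nat.sub_le d i), key]
    have hb : (-1 : ℂ) ^ i * (-(2 * Real.pi * Complex.I) * z) ^ i
        = (2 * Real.pi * Complex.I * z) ^ i := by
      rw [← mul_pow]; congr 1; ring
    linear_combination ((-(2 * Real.pi * Complex.I) * (starRingEnd ℂ z)) ^ (d - i)
        / ((d - i).factorial : ℂ) * (intc : ℂ) / (i.factorial : ℂ)) * hb
  rw [hQ, Finset.sum_congr rfl hterm, ← Finset.sum_mul]
  -- the binomial-type sum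
  have hsum : ∀ x y : ℂ,
      ∑ i ∈ Finset.range (d + 1),
          x ^ i / (i.factorial : ℂ) * (y ^ (d - i) / ((d - i).factorial : ℂ))
        = (x + y) ^ d / (d.factorial : ℂ) := by
    intro x y
    rw [add_pow, Finset.sum_div]
    refine Finset.sum_congr rfl fun i hi => ?_
    have hi' : i ≤ d := Nat.lt_succ_iff.mp (Finset.mem_range.mp hi)
    rw [Nat.cast_choose ℂ hi']
    have h1 : (i.factorial : ℂ) ≠ 0 := Nat.cast_ne_zero.mpr i.factorial_ne_zero
    have h2 : ((d - i).factorial : ℂ) ≠ 0 :=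
      Nat.cast_ne_zero.mpr (d - i).factorial_ne_zero
    have h3 : (d.factorial : ℂ) ≠ 0 := Nat.cast_ne_zero.mpr d.factorial_ne_zero
    field_simp
  rw [hsum]
  have hxy : (2 * (Real.pi : ℂ) * Complex.I * z
        + -(2 * (Real.pi : ℂ) * Complex.I) * (starRingEnd ℂ z))
      = 2 * (Real.pi : ℂ) * Complex.I * (((2 * z.im : ℝ) : ℂ) * Complex.I) := by
    have h := Complex.sub_conj z
    linear_combination (2 * (Real.pi : ℂ) * Complex.I) * h
  rw [hxy]
  have hbase : Complex.I * (2 * (Real.pi : ℂ) * Complex.I)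
        * (2 * (Real.pi : ℂ) * Complex.I * (((2 * z.im : ℝ) : ℂ) * Complex.I))
      = (2 * (Real.pi : ℂ)) ^ 2 * ((2 * z.im : ℝ) : ℂ) := by
    have h2 : (Complex.I : ℂ) ^ 2 = -1 := Complex.I_sq
    push_cast
    linear_combination (8 * (Real.pi : ℂ) ^ 2 * (z.im : ℂ)
        * (Complex.I ^ 2 - 1)) * h2
  have hpow : Complex.I ^ d * (2 * (Real.pi : ℂ) * Complex.I) ^ d
        * (2 * (Real.pi : ℂ) * Complex.I * (((2 * z.im : ℝ) : ℂ) * Complex.I)) ^ d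
      = ((2 * (Real.pi : ℂ)) ^ 2) ^ d * (((2 * z.im : ℝ) : ℂ)) ^ d := by
    rw [← mul_pow, ← mul_pow, ← mul_pow, hbase]
  have h3 : (d.factorial : ℂ) ≠ 0 := Nat.cast_ne_zero.mpr d.factorial_ne_zero
  push_cast [pow_mul]
  push_cast at hpow
  field_simp
  linear_combination (intc : ℂ) * hpow
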